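/- Let F be a field of characteristic zero, V a finite-dimensional F-vector space, and Q a nondegenerate quadratic form on V. Then every element g of GPin(V) is homogeneous for the ℤ/2-grading of the Clifford algebra: either g lies in the even part C⁺(V) or g lies in the odd part C⁻(V) (in Mathlib terms, g ∈ evenOdd Q 0 or g ∈ evenOdd Q 1). In particular the sign character sign : GPin(V) → {±1}, equal to +1 on GPin(V) ∩ C⁺(V) and −1 on GPin(V) ∩ C⁻(V), is well defined. -/

import Mathlib

/-!
For `g ∈ GPin(V)` the element `u = α(g⁻¹) g` graded-commutes with every vector:
`ι v * u = α(u) * ι v`. The graded commutator with `ι v` is contraction by `B(v, ·)`, so for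
nondegenerate `Q` every contraction of `u` vanishes. Transported to the exterior algebra, where
the number operator `∑ eᵢ ∧ (eᵢ* ⌋ ·)` acts on `⋀ᵏ` as multiplication by `k`, this forces `u`
to be a scalar `r` in characteristic zero. Then `α(g) = r g`, and `α² = 1` gives `r = ±1`.
-/

open CliffordAlgebra

namespace DirectSum

variable {ι R M : Type*} [DecidableEq ι] [Semiring R] [AddCommMonoid M] [Module R M]
  (ℳ : ι → Submodule R M) [Decomposition ℳ]

theorem decompose_map_apply_of_forall_mem_eq_smul {f : M →ₗ[R] M} {c : ι → R}
    (hf : ∀ i, ∀ x ∈ ℳ i, f x = c i • x) (x : M) (i : ι) :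
    (decompose ℳ (f x) i : M) = c i • (decompose ℳ x i : M) := by
  induction x using Decomposition.inductionOn ℳ with
  | zero => simp
  | @homogeneous j y =>
    rw [hf j y y.2, decompose_smul, decompose_coe]
    obtain rfl | hj := eq_or_ne i j
    · simp [smul_apply]
    · simp [smul_apply, of_eq_of_ne _ _ _ hj]
  | add y z hy hz => simp [hy, hz, smul_add]

theorem mem_of_forall_ne_decompose_eq_zero {x : M} {i : ι}
    (h : ∀ j ≠ i, (decompose ℳ x j : M) = 0) : x ∈ ℳ i := by
  have hx : decompose ℳ x = of _ i (decompose ℳ x i) := by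
    ext j
    obtain rfl | hj := eq_or_ne j i
    · simp
    · simp [of_eq_of_ne _ _ _ hj, h j hj]
  rw [← (decompose ℳ).symm_apply_apply x, hx, decompose_symm_of]
  exact SetLike.coe_mem _

end DirectSum

namespace ExteriorAlgebra

variable {R M κ : Type*} [CommRing R] [AddCommGroup M] [Module R M] [Fintype κ]

noncomputable def numberOperator (b : Module.Basis κ R M) :
    ExteriorAlgebra R M →ₗ[R] ExteriorAlgebra R M :=
  ∑ i, LinearMap.mulLeft R (ι R (b i)) ∘ₗ contractLeft (b.coord i)

theorem numberOperator_apply (b : Module.Basis κ R M) (x : ExteriorAlgebra R M) :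
    numberOperator b x = ∑ i, ι R (b i) * contractLeft (b.coord i) x := by
  simp [numberOperator]

theorem numberOperator_apply_of_mem (b : Module.Basis κ R M) {k : ℕ} {x : ExteriorAlgebra R M}
    (hx : x ∈ ⋀[R]^k M) : numberOperator b x = (k : R) • x := by
  induction hx using Submodule.pow_induction_on_left' with
  | algebraMap r => simp [numberOperator_apply]
  | add x y i hx hy ihx ihy => simp only [map_add, ihx, ihy, smul_add]
  | mem_mul m hm i x hx ih =>
    obtain ⟨v, rfl⟩ := hm
    have hv : ∑ j, b.coord j v • ι R (b j) = ι R v := by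
      simp_rw [← map_smul, ← map_sum, Module.Basis.coord_apply, Module.Basis.sum_repr]
    have hanti (j : κ) : ι R (b j) * ι R v = -(ι R v * ι R (b j)) :=
      eq_neg_of_add_eq_zero_left (ι_add_mul_swap _ _)
    calc numberOperator b (ι R v * x)
        = ∑ j, (b.coord j v • ι R (b j) * x +
            ι R v * (ι R (b j) * contractLeft (b.coord j) x)) := by
          simp only [numberOperator_apply, contractLeft_ι_mul, mul_sub, ← mul_assoc, hanti]
          refine Finset.sum_congr rfl fun j _ => ?_
          rw [smul_mul_assoc, mul_smul_comm, neg_mul, sub_neg_eq_add, mul_assoc]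
      _ = ι R v * x + ι R v * numberOperator b x := by
          rw [Finset.sum_add_distrib, ← Finset.sum_mul, hv, ← Finset.mul_sum, numberOperator_apply]
      _ = ((i + 1 : ℕ) : R) • (ι R v * x) := by
          rw [ih, mul_smul_comm, Nat.cast_succ, add_smul, one_smul, add_comm]

theorem exists_algebraMap_eq_of_forall_contractLeft_eq_zero {F V : Type*} [Field F] [CharZero F]
    [AddCommGroup V] [Module F V] [FiniteDimensional F V] {x : ExteriorAlgebra F V}
    (hx : ∀ d : Module.Dual F V, contractLeft d x = 0) :
    ∃ r : F, algebraMap F (ExteriorAlgebra F V) r = x := by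
  let b := Module.finBasis F V
  have hN : numberOperator b x = 0 := by simp [numberOperator_apply, hx]
  have hx0 : x ∈ ⋀[F]^0 V := by
    refine DirectSum.mem_of_forall_ne_decompose_eq_zero (fun k : ℕ => ⋀[F]^k V) fun k hk => ?_
    have := DirectSum.decompose_map_apply_of_forall_mem_eq_smul (fun k : ℕ => ⋀[F]^k V)
      (fun k _ => numberOperator_apply_of_mem b) x k
    rw [hN, DirectSum.decompose_zero, DirectSum.zero_apply, ZeroMemClass.coe_zero, eq_comm,
      smul_eq_zero] at this
    exact this.resolve_left (Nat.cast_ne_zero.mpr hk)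
  simpa [Submodule.mem_one] using hx0

end ExteriorAlgebra

namespace CliffordAlgebra

variable {R M : Type*} [CommRing R] [AddCommGroup M] [Module R M] {Q : QuadraticForm R M}

theorem ι_mul_eq_involute_mul_ι_add_contractLeft (v : M) (x : CliffordAlgebra Q) :
    ι Q v * x = involute x * ι Q v + contractLeft (Q.polarBilin v) x := by
  induction x using CliffordAlgebra.left_induction with
  | algebraMap r => simp [Algebra.commutes]
  | add x y hx hy => rw [mul_add, hx, hy, map_add, map_add, add_mul]; abel
  | ι_mul x m hx =>
    rw [← mul_assoc, ι_mul_ι_comm, sub_mul, mul_assoc, hx, map_mul, involute_ι,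
      contractLeft_ι_mul, mul_add, ← Algebra.smul_def, QuadraticMap.polarBilin_apply_apply,
      neg_mul, neg_mul, mul_assoc]
    abel

theorem ι_mul_involute_mul_eq {g h : CliffordAlgebra Q} (hhg : h * g = 1)
    (hg : ∀ v, involute g * ι Q v * h ∈ Set.range (ι Q)) (v : M) :
    ι Q v * (involute h * g) = involute (involute h * g) * ι Q v := by
  obtain ⟨w, hw⟩ := hg v
  -- `involute g * ι Q v * h` is a vector, hence negated by `involute`.
  have hswap : g * ι Q v * involute h = involute g * ι Q v * h := by
    have := congrArg involute hw
    simp only [map_mul, involute_involute, involute_ι, mul_neg, neg_mul, neg_inj] at this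
    rw [← this, hw]
  calc ι Q v * (involute h * g)
      = h * (g * ι Q v * involute h) * g := by simp only [← mul_assoc, hhg, one_mul]
    _ = involute (involute h * g) * ι Q v := by
      rw [hswap, map_mul, involute_involute]
      simp only [mul_assoc, hhg, mul_one]

theorem exists_even_add_odd (x : CliffordAlgebra Q) :
    ∃ y ∈ evenOdd Q 0, ∃ z ∈ evenOdd Q 1, y + z = x :=
  Submodule.mem_sup.mp ((evenOdd_isCompl Q).sup_eq_top ▸ Submodule.mem_top)

variable [Invertible (2 : R)]

theorem mem_evenOdd_zero_of_involute_eq {x : CliffordAlgebra Q} (h : involute x = x) :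
    x ∈ evenOdd Q 0 := by
  obtain ⟨y, hy, z, hz, rfl⟩ := exists_even_add_odd x
  rw [map_add, involute_eq_of_mem_even hy, involute_eq_of_mem_odd hz, add_right_inj,
    neg_eq_iff_add_eq_zero, ← two_smul R, (isUnit_of_invertible (2 : R)).smul_eq_zero] at h
  simpa [h] using hy

theorem mem_evenOdd_one_of_involute_eq_neg {x : CliffordAlgebra Q} (h : involute x = -x) :
    x ∈ evenOdd Q 1 := by
  obtain ⟨y, hy, z, hz, rfl⟩ := exists_even_add_odd x
  rw [map_add, involute_eq_of_mem_even hy, involute_eq_of_mem_odd hz, neg_add, add_left_inj,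
    eq_neg_iff_add_eq_zero, ← two_smul R, (isUnit_of_invertible (2 : R)).smul_eq_zero] at h
  simpa [h] using hz

section Field

variable {F V : Type*} [Field F] [AddCommGroup V] [Module F V] {Q : QuadraticForm F V}

theorem mem_evenOdd_zero_or_one_of_involute_eq_smul [Invertible (2 : F)]
    {x : CliffordAlgebra Q} {r : F} (hx : x ≠ 0) (h : involute x = r • x) : x ∈ evenOdd Q 0 ∨ x ∈ evenOdd Q 1 := by
  have hr : r * r = 1 := by
    have : (r * r) • x = (1 : F) • x := by
      rw [one_smul, mul_smul, ← h, ← map_smul, ← h, involute_involute]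
    exact (smul_left_injective F hx).eq_iff.mp this
  rcases mul_self_eq_one_iff.mp hr with rfl | rfl
  · exact .inl (mem_evenOdd_zero_of_involute_eq (by rw [h, one_smul]))
  · exact .inr (mem_evenOdd_one_of_involute_eq_neg (by rw [h, neg_one_smul]))

variable [CharZero F] [FiniteDimensional F V]

theorem exists_algebraMap_eq_of_forall_ι_mul_eq_involute_mul_ι (hQ : Q.polarBilin.Nondegenerate)
    {x : CliffordAlgebra Q} (hx : ∀ v, ι Q v * x = involute x * ι Q v) :
    ∃ r : F, algebraMap F (CliffordAlgebra Q) r = x := by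
  let : Invertible (2 : F) := invertibleOfNonzero two_ne_zero
  have hcontract (d : Module.Dual F V) : contractLeft d x = 0 := by
    obtain ⟨w, rfl⟩ := (LinearMap.BilinForm.toDual Q.polarBilin hQ).surjective d
    have := ι_mul_eq_involute_mul_ι_add_contractLeft w x
    rw [hx w, left_eq_add] at this
    exact this
  obtain ⟨r, hr⟩ := ExteriorAlgebra.exists_algebraMap_eq_of_forall_contractLeft_eq_zero
    (x := equivExterior Q x) fun d => by
      rw [equivExterior, changeFormEquiv_apply, ← changeForm_contractLeft, hcontract, map_zero]
  refine ⟨r, (equivExterior Q).injective ?_⟩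
  rw [← hr, equivExterior, changeFormEquiv_apply, changeForm_algebraMap]

end Field

end CliffordAlgebra

/-- Let `F` be a field of characteristic zero, `V` a finite-dimensional `F`-vector space, and
`Q` a nondegenerate quadratic form on `V`. Then every element `g` of `GPin(V)` is
homogeneous for the `ℤ/2`-grading of the Clifford algebra: either `g` lies in the even
part `C⁺(V) = evenOdd Q 0` or in the odd part `C⁻(V) = evenOdd Q 1`.  In particular the
sign character `sign : GPin(V) → {±1}` is well defined. -/
theorem GPin_element_is_homogeneous
    {F V : Type*} [Field F] [CharZero F] [AddCommGroup V] [Module F V]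
    [FiniteDimensional F V] (Q : QuadraticForm F V) (hQ : Q.polarBilin.Nondegenerate)
    (g : (CliffordAlgebra Q)ˣ)
    (hg : (fun x => involute (g : CliffordAlgebra Q) * x *
        ((g⁻¹ : (CliffordAlgebra Q)ˣ) : CliffordAlgebra Q)) '' Set.range (ι Q) =
        Set.range (ι Q)) :
    (g : CliffordAlgebra Q) ∈ evenOdd Q 0 ∨ (g : CliffordAlgebra Q) ∈ evenOdd Q 1 := by
  let : Invertible (2 : F) := invertibleOfNonzero two_ne_zero
  have hconj (v : V) : involute (g : CliffordAlgebra Q) * ι Q v * ↑g⁻¹ ∈ Set.range (ι Q) :=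
    hg ▸ Set.mem_image_of_mem _ (Set.mem_range_self v)
  obtain ⟨r, hr⟩ := exists_algebraMap_eq_of_forall_ι_mul_eq_involute_mul_ι hQ
    (ι_mul_involute_mul_eq g.inv_mul hconj)
  have hinvolute : involute (g : CliffordAlgebra Q) = r • (g : CliffordAlgebra Q) :=
    calc involute (g : CliffordAlgebra Q)
        = involute (involute ↑g * (involute ↑g⁻¹ * ↑g)) := by
          rw [← mul_assoc, ← map_mul, g.mul_inv, map_one, one_mul]
      _ = r • (g : CliffordAlgebra Q) := by
          rw [← hr, ← Algebra.commutes, ← Algebra.smul_def, map_smul, involute_involute]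
  exact mem_evenOdd_zero_or_one_of_involute_eq_smul g.ne_zero hinvolute
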